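/- Consider the mean-field Ising model π(x) = exp(β S_N(x)²/(2N))/Z_N on X = {−1,1}^N with N even, and the Metropolis chain M with the equi-energy proposal K of equation (proposal) with parameters p₁, p₂ ∈ (0,1), p₁ + p₂ < 1. Let \bar P be the projected chain on energy levels {0,2,...,N} defined by \bar P(i,j) = (1/(2π(X_i))) Σ_{x∈X_i, y∈X_j} M(x,y)π(x) for i ≠ j, where X_i = {x : |S_N(x)| = i}. Then \bar P is a birth and death chain with \bar P(0,2) = p₁/2, \bar P(i,i+2) = (p₁/4)(N−i)/N for 0 < i < N, and \bar P(i,i−2) = (p₁/4)((N+i)/N)·exp(2β(1−i)/N) for i ≠ 0. -/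

import Mathlib

/-!
Of the moves proposed by `isingK`, the uniform resampling inside `X_0` or `X_i^±` and the
reversal `x ↦ -x` all preserve `|S_N|`, so a transition between different levels is a single
spin flip, proposed with probability `p₁ / N` and accepted with probability
`min 1 (exp (β (j² - i²) / (2N)))`, which depends only on the two levels. Flipping a `+1` spin
lowers `S_N` by 2 and flipping a `-1` spin raises it by 2, and there are `(N ± S_N) / 2` of each.
Hence every `x ∈ X_i` carries the same mass `∑_{y ∈ X_j} M(x, y)` into `X_j`, and `π(X_i)` cancels
in `\bar P(i, j)`.
-/

open Finset

/-- Total spin `S_N(x) = ∑ x_i` of a configuration `x ∈ {-1,1}^N` (encoded by `Bool`). -/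
def SN (N : ℕ) (x : Fin N → Bool) : ℤ := ∑ i, (if x i then 1 else -1)

/-- Gibbs weight `exp(β S_N(x)²/(2N))` of the mean-field Ising model. -/
noncomputable def isingW (N : ℕ) (β : ℝ) (x : Fin N → Bool) : ℝ :=
  Real.exp (β * ((SN N x : ℝ)) ^ 2 / (2 * N))

/-- The mean-field Ising Gibbs measure `π(x) = exp(β S_N(x)²/(2N))/Z_N`. -/
noncomputable def isingPi (N : ℕ) (β : ℝ) (x : Fin N → Bool) : ℝ :=
  isingW N β x / ∑ y, isingW N β y

/-- Unsigned energy level `X_i = {x : |S_N(x)| = i}`. -/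
def isingLevel (N i : ℕ) : Finset (Fin N → Bool) :=
  Finset.univ.filter fun x => (SN N x).natAbs = i

/-- Signed level `X_s = {x : S_N(x) = s}`. -/
def isingLevelS (N : ℕ) (s : ℤ) : Finset (Fin N → Bool) :=
  Finset.univ.filter fun x => SN N x = s

/-- Flip of the `j`-th spin. -/
def isingFlip (N : ℕ) (x : Fin N → Bool) (j : Fin N) : Fin N → Bool :=
  Function.update x j (!x j)

/-- Global spin reversal `x ↦ -x`. -/
def isingNeg (N : ℕ) (x : Fin N → Bool) : Fin N → Bool := fun i => !x i

/-- The equi-energy proposal `K` of equation (proposal): with prob. `p₁` flip a uniform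
coordinate; on `X_0`, with prob. `1-p₁` sample uniformly in `X_0`; on `X_i` (`i ≠ 0`),
with prob. `p₂` jump to `-x` and with prob. `1-p₁-p₂` sample uniformly in `X_i^±`. -/
noncomputable def isingK (N : ℕ) (p₁ p₂ : ℝ) (x y : Fin N → Bool) : ℝ :=
  p₁ * (1 / (N : ℝ)) * ∑ j, (if y = isingFlip N x j then (1 : ℝ) else 0) +
  if SN N x = 0 then
    (1 - p₁) * (if SN N y = 0 then 1 / ((isingLevel N 0).card : ℝ) else 0)
  else
    p₂ * (if y = isingNeg N x then 1 else 0) +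
    (1 - p₁ - p₂) *
      (if SN N y = SN N x then 1 / ((isingLevelS N (SN N x)).card : ℝ) else 0)

/-- The Metropolis chain `M` with symmetric proposal `isingK` and target `isingPi`. -/
noncomputable def isingM (N : ℕ) (β p₁ p₂ : ℝ) (x y : Fin N → Bool) : ℝ :=
  if y = x then
    1 - ∑ z ∈ Finset.univ.erase x,
      isingK N p₁ p₂ x z * min 1 (isingPi N β z / isingPi N β x)
  else isingK N p₁ p₂ x y * min 1 (isingPi N β y / isingPi N β x)

/-- The projected chain on energy levels:
`\bar P(i,j) = (1/(2π(X_i))) ∑_{x∈X_i} ∑_{y∈X_j} M(x,y) π(x)` (for `i ≠ j`). -/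
noncomputable def isingBar (N : ℕ) (β p₁ p₂ : ℝ) (i j : ℕ) : ℝ :=
  (1 / (2 * ∑ x ∈ isingLevel N i, isingPi N β x)) *
    ∑ x ∈ isingLevel N i, ∑ y ∈ isingLevel N j, isingM N β p₁ p₂ x y * isingPi N β x

section

variable {N : ℕ} {β p₁ p₂ : ℝ}

theorem SN_eq_card_sub_card (x : Fin N → Bool) :
    SN N x = (#{k | x k = true} : ℤ) - #{k | x k = false} := by
  simp [SN, Finset.sum_ite, sub_eq_add_neg]

theorem card_true_add_card_false (x : Fin N → Bool) :
    #{k | x k = true} + #{k | x k = false} = N := by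
  simpa using card_filter_add_card_filter_not (s := univ) (fun k => x k = true)

theorem SN_isingFlip (x : Fin N → Bool) (j : Fin N) :
    SN N (isingFlip N x j) = SN N x + if x j then -2 else 2 := by
  unfold SN isingFlip
  rw [← add_sum_erase _ _ (mem_univ j), ← add_sum_erase _ _ (mem_univ j),
    sum_congr rfl fun k hk => by rw [Function.update_of_ne (ne_of_mem_erase hk)]]
  cases x j <;> simp <;> ring

theorem SN_isingNeg (x : Fin N → Bool) : SN N (isingNeg N x) = -SN N x := by
  simp only [SN, isingNeg, ← sum_neg_distrib]
  exact sum_congr rfl fun k _ => by by_cases h : x k <;> simp [h]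

theorem isingLevel_nonempty {i : ℕ} (hN : Even N) (hi : Even i) (hiN : i ≤ N) :
    (isingLevel N i).Nonempty := by
  obtain ⟨a, rfl⟩ := hN
  obtain ⟨b, rfl⟩ := hi
  refine ⟨fun k => decide ((k : ℕ) < a + b), mem_filter.2 ⟨mem_univ _, ?_⟩⟩
  have hfalse : #{k : Fin (a + a) | decide ((k : ℕ) < a + b) = false} = a - b := by
    have := card_true_add_card_false fun k : Fin (a + a) => decide ((k : ℕ) < a + b)
    simp only [decide_eq_true_eq, Fin.card_filter_val_lt] at this
    omega
  rw [SN_eq_card_sub_card, hfalse]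
  simp only [decide_eq_true_eq, Fin.card_filter_val_lt]
  omega

theorem sq_SN_of_mem_isingLevel {i : ℕ} {x : Fin N → Bool} (hx : x ∈ isingLevel N i) :
    (SN N x : ℝ) ^ 2 = (i : ℝ) ^ 2 := by
  rw [← (mem_filter.1 hx).2, Nat.cast_natAbs, Int.cast_abs, sq_abs]

theorem sum_isingW_pos : 0 < ∑ x, isingW N β x :=
  sum_pos (fun _ _ => Real.exp_pos _) univ_nonempty

theorem isingPi_pos (x : Fin N → Bool) : 0 < isingPi N β x :=
  div_pos (Real.exp_pos _) sum_isingW_pos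

theorem isingPi_div_isingPi {i j : ℕ} {x y : Fin N → Bool} (hx : x ∈ isingLevel N i)
    (hy : y ∈ isingLevel N j) :
    isingPi N β y / isingPi N β x = Real.exp (β * ((j : ℝ) ^ 2 - (i : ℝ) ^ 2) / (2 * N)) := by
  rw [isingPi, isingPi, div_div_div_cancel_right₀ sum_isingW_pos.ne', isingW, isingW,
    ← Real.exp_sub, sq_SN_of_mem_isingLevel hx, sq_SN_of_mem_isingLevel hy]
  ring_nf

theorem isingK_of_natAbs_ne {x y : Fin N → Bool}
    (h : (SN N y).natAbs ≠ (SN N x).natAbs) :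
    isingK N p₁ p₂ x y = p₁ * (1 / N) * ∑ k, if y = isingFlip N x k then 1 else 0 := by
  unfold isingK
  split_ifs <;> simp_all [SN_isingNeg]

noncomputable def levelAcceptance (N : ℕ) (β : ℝ) (i j : ℕ) : ℝ :=
  min 1 (Real.exp (β * ((j : ℝ) ^ 2 - (i : ℝ) ^ 2) / (2 * N)))

theorem levelAcceptance_of_le (hβ : 0 ≤ β) {i j : ℕ} (hij : i ≤ j) :
    levelAcceptance N β i j = 1 := by
  have hsq : (i : ℝ) ^ 2 ≤ (j : ℝ) ^ 2 := by gcongr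
  exact min_eq_left (Real.one_le_exp (by have := sub_nonneg.2 hsq; positivity))

theorem levelAcceptance_sub_two (hβ : 0 ≤ β) {i : ℕ} (hi : 2 ≤ i) :
    levelAcceptance N β i (i - 2) = Real.exp (2 * β * (1 - i) / N) := by
  have hexp : β * (((i - 2 : ℕ) : ℝ) ^ 2 - (i : ℝ) ^ 2) / (2 * N) = 2 * β * (1 - i) / N := by
    rw [Nat.cast_sub hi]
    ring
  have hi1 : (1 : ℝ) ≤ i := by exact_mod_cast (by omega : 1 ≤ i)
  rw [levelAcceptance, hexp]
  exact min_eq_right (Real.exp_le_one_iff.2 (div_nonpos_of_nonpos_of_nonneg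
    (mul_nonpos_of_nonneg_of_nonpos (by positivity) (by linarith)) (Nat.cast_nonneg N)))

theorem isingM_of_mem_isingLevel {i j : ℕ} {x y : Fin N → Bool}
    (hx : x ∈ isingLevel N i) (hy : y ∈ isingLevel N j) (hij : j ≠ i) :
    isingM N β p₁ p₂ x y =
      p₁ * (1 / N) * (∑ k, if y = isingFlip N x k then 1 else 0) * levelAcceptance N β i j := by
  have hS : (SN N y).natAbs ≠ (SN N x).natAbs := by
    rwa [(mem_filter.1 hx).2, (mem_filter.1 hy).2]
  have hyx : y ≠ x := by rintro rfl; exact hS rfl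
  rw [isingM, if_neg hyx, isingK_of_natAbs_ne hS, isingPi_div_isingPi hx hy, levelAcceptance]

def flipsToLevel (x : Fin N → Bool) (j : ℕ) : ℕ :=
  #{k | (SN N (isingFlip N x k)).natAbs = j}

theorem sum_isingM_isingLevel {i j : ℕ} {x : Fin N → Bool}
    (hx : x ∈ isingLevel N i) (hij : j ≠ i) :
    ∑ y ∈ isingLevel N j, isingM N β p₁ p₂ x y =
      p₁ * (1 / N) * flipsToLevel x j * levelAcceptance N β i j := by
  rw [sum_congr rfl fun y hy => isingM_of_mem_isingLevel hx hy hij, ← sum_mul, ← mul_sum,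
    sum_comm]
  simp [flipsToLevel, isingLevel, sum_ite_eq']

theorem flipsToLevel_eq (x : Fin N → Bool) (j : ℕ) :
    flipsToLevel x j =
      (if (SN N x - 2).natAbs = j then #{k | x k = true} else 0) +
        (if (SN N x + 2).natAbs = j then #{k | x k = false} else 0) := by
  have hflip (k : Fin N) : (if (SN N (isingFlip N x k)).natAbs = j then 1 else 0) =
      if x k = true then (if (SN N x - 2).natAbs = j then 1 else 0)
      else (if (SN N x + 2).natAbs = j then 1 else 0) := by
    rw [SN_isingFlip]
    split_ifs <;> simp_all [← sub_eq_add_neg]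
  rw [flipsToLevel, card_filter, sum_congr rfl fun k _ => hflip k, sum_ite]
  split_ifs <;> simp

theorem flipsToLevel_two_of_mem_isingLevel_zero {x : Fin N → Bool} (hx : x ∈ isingLevel N 0) :
    flipsToLevel x 2 = N := by
  have := card_true_add_card_false x
  have := (mem_filter.1 hx).2
  rw [flipsToLevel_eq]
  split_ifs <;> omega

theorem two_mul_flipsToLevel_add_two {i : ℕ} (hi : 0 < i) {x : Fin N → Bool}
    (hx : x ∈ isingLevel N i) : 2 * flipsToLevel x (i + 2) = N - i := by
  have := SN_eq_card_sub_card x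
  have := card_true_add_card_false x
  have := (mem_filter.1 hx).2
  rw [flipsToLevel_eq]
  split_ifs <;> omega

theorem two_mul_flipsToLevel_sub_two {i : ℕ} (hi : 2 ≤ i) {x : Fin N → Bool}
    (hx : x ∈ isingLevel N i) : 2 * flipsToLevel x (i - 2) = N + i := by
  have := SN_eq_card_sub_card x
  have := card_true_add_card_false x
  have := (mem_filter.1 hx).2
  rw [flipsToLevel_eq]
  split_ifs <;> omega

theorem flipsToLevel_eq_zero {i j : ℕ} (hji : j ≠ i) (hj : j ≠ i + 2) (hi : i ≠ j + 2)
    {x : Fin N → Bool} (hx : x ∈ isingLevel N i) : flipsToLevel x j = 0 := by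
  have := (mem_filter.1 hx).2
  rw [flipsToLevel_eq]
  split_ifs <;> omega

theorem isingBar_eq_of_flipsToLevel {i j : ℕ} (hne : (isingLevel N i).Nonempty)
    (hij : j ≠ i) {c : ℝ} (hc : ∀ x ∈ isingLevel N i, (flipsToLevel x j : ℝ) = c) :
    isingBar N β p₁ p₂ i j = p₁ * c / (2 * N) * levelAcceptance N β i j := by
  have hZ : 0 < ∑ x ∈ isingLevel N i, isingPi N β x := sum_pos (fun x _ => isingPi_pos x) hne
  have hrow (x) (hx : x ∈ isingLevel N i) :
      ∑ y ∈ isingLevel N j, isingM N β p₁ p₂ x y * isingPi N β x =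
        p₁ * c / N * levelAcceptance N β i j * isingPi N β x := by
    rw [← sum_mul, sum_isingM_isingLevel hx hij, hc x hx]
    ring
  rw [isingBar, sum_congr rfl hrow, ← mul_sum]
  field_simp

theorem isingBar_zero_two (hN : Even N) (hN0 : N ≠ 0) (hβ : 0 ≤ β) :
    isingBar N β p₁ p₂ 0 2 = p₁ / 2 := by
  rw [isingBar_eq_of_flipsToLevel (isingLevel_nonempty hN Even.zero N.zero_le) two_ne_zero
    fun x hx => congrArg _ (flipsToLevel_two_of_mem_isingLevel_zero hx),
    levelAcceptance_of_le hβ zero_le_two]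
  field_simp

theorem isingBar_add_two {i : ℕ} (hN : Even N) (hi : Even i) (hi0 : 0 < i) (hiN : i < N)
    (hβ : 0 ≤ β) : isingBar N β p₁ p₂ i (i + 2) = p₁ / 4 * ((N - i) / N) := by
  have hc (x) (hx : x ∈ isingLevel N i) : (flipsToLevel x (i + 2) : ℝ) = (N - i) / 2 := by
    have := congrArg (Nat.cast (R := ℝ)) (two_mul_flipsToLevel_add_two hi0 hx)
    push_cast [Nat.cast_sub hiN.le] at this
    linarith
  rw [isingBar_eq_of_flipsToLevel (isingLevel_nonempty hN hi hiN.le) (by omega) hc,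
    levelAcceptance_of_le hβ (by omega)]
  ring

theorem isingBar_sub_two {i : ℕ} (hN : Even N) (hi : Even i) (hi0 : 0 < i) (hiN : i ≤ N)
    (hβ : 0 ≤ β) :
    isingBar N β p₁ p₂ i (i - 2) = p₁ / 4 * ((N + i) / N) * Real.exp (2 * β * (1 - i) / N) := by
  have hi2 : 2 ≤ i := by obtain ⟨k, rfl⟩ := hi; omega
  have hc (x) (hx : x ∈ isingLevel N i) : (flipsToLevel x (i - 2) : ℝ) = (N + i) / 2 := by
    have := congrArg (Nat.cast (R := ℝ)) (two_mul_flipsToLevel_sub_two hi2 hx)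
    push_cast at this
    linarith
  rw [isingBar_eq_of_flipsToLevel (isingLevel_nonempty hN hi hiN) (by omega) hc,
    levelAcceptance_sub_two hβ hi2]
  ring

theorem isingBar_eq_zero {i j : ℕ} (hji : j ≠ i) (hj : j ≠ i + 2) (hi : i ≠ j + 2) :
    isingBar N β p₁ p₂ i j = 0 := by
  have hrow (x) (hx : x ∈ isingLevel N i) :
      ∑ y ∈ isingLevel N j, isingM N β p₁ p₂ x y * isingPi N β x = 0 := by
    rw [← sum_mul, sum_isingM_isingLevel hx hji, flipsToLevel_eq_zero hji hj hi hx]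
    simp
  rw [isingBar, sum_eq_zero hrow, mul_zero]

end

theorem ising_projected_chain_general (N : ℕ) (hN : 2 ≤ N) (hNe : Even N)
    (β p₁ p₂ : ℝ) (hβ : 0 < β) :
    isingBar N β p₁ p₂ 0 2 = p₁ / 2 ∧
    (∀ i : ℕ, Even i → 0 < i → i < N →
      isingBar N β p₁ p₂ i (i + 2) = (p₁ / 4) * (((N : ℝ) - i) / N)) ∧
    (∀ i : ℕ, Even i → 0 < i → i ≤ N →
      isingBar N β p₁ p₂ i (i - 2)
        = (p₁ / 4) * (((N : ℝ) + i) / N) * Real.exp (2 * β * (1 - (i : ℝ)) / N)) ∧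
    (∀ i j : ℕ, Even i → Even j → i ≤ N → j ≤ N → j ≠ i → j ≠ i + 2 → i ≠ j + 2 →
      isingBar N β p₁ p₂ i j = 0) :=
  ⟨isingBar_zero_two hNe (by omega) hβ.le,
    fun _ hi hi0 hiN => isingBar_add_two hNe hi hi0 hiN hβ.le,
    fun _ hi hi0 hiN => isingBar_sub_two hNe hi hi0 hiN hβ.le,
    fun _ _ _ _ _ _ hji hj hi => isingBar_eq_zero hji hj hi⟩

/-- the projected chain `\bar P` on levels `{0,2,…,N}` is a birth and
death chain with `\bar P(0,2) = p₁/2`, `\bar P(i,i+2) = (p₁/4)(N-i)/N` for `0 < i < N`,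
and `\bar P(i,i-2) = (p₁/4)((N+i)/N) exp(2β(1-i)/N)` for `i ≠ 0`. -/
theorem ising_projected_chain (N : ℕ) (hN : 2 ≤ N) (hNe : Even N)
    (β p₁ p₂ : ℝ) (hβ : 0 < β) (hp₁ : p₁ ∈ Set.Ioo (0 : ℝ) 1)
    (hp₂ : p₂ ∈ Set.Ioo (0 : ℝ) 1) (hps : p₁ + p₂ < 1) :
    isingBar N β p₁ p₂ 0 2 = p₁ / 2 ∧
    (∀ i : ℕ, Even i → 0 < i → i < N →
      isingBar N β p₁ p₂ i (i + 2) = (p₁ / 4) * (((N : ℝ) - i) / N)) ∧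
    (∀ i : ℕ, Even i → 0 < i → i ≤ N →
      isingBar N β p₁ p₂ i (i - 2)
        = (p₁ / 4) * (((N : ℝ) + i) / N) * Real.exp (2 * β * (1 - (i : ℝ)) / N)) ∧
    (∀ i j : ℕ, Even i → Even j → i ≤ N → j ≤ N → j ≠ i → j ≠ i + 2 → i ≠ j + 2 →
      isingBar N β p₁ p₂ i j = 0) :=
  ising_projected_chain_general N hN hNe β p₁ p₂ hβ
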